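/- For all integers N > 1, K > 1, and M with 1 ≤ M ≤ K−1, if M+1 does not divide K, then 1 + ∑_{k=1}^{g−1} r_k (N−1)^k < N^{g−1} (as rational numbers), and consequently P_0 := (1 + ∑_{k=1}^{g−1} r_k (N−1)^k)^{−1} satisfies P_0 > N^{1−g}. -/

import Mathlib

open Finset

/-- `g := ⌈K/(M+1)⌉`, the ceiling of the exact rational quotient `K/(M+1)`. -/
def gVal (K M : ℕ) : ℕ := ⌈(K : ℚ) / (M + 1)⌉₊

/-- `r_k := ∏_{j=1}^{k} (K/(M+1) − j)/j` as a rational number. -/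
def rVal (K M : ℕ) (k : ℕ) : ℚ :=
  ∏ j ∈ Finset.Icc 1 k, ((K : ℚ) / (M + 1) - (j : ℚ)) / (j : ℚ)

/-- `P_0 := (1 + ∑_{k=1}^{g−1} r_k (N−1)^k)⁻¹`. -/
def P0Val (N K M : ℕ) : ℚ :=
  (1 + ∑ k ∈ Finset.Icc 1 (gVal K M - 1), rVal K M k * ((N : ℚ) - 1) ^ k)⁻¹

/-- `R := (N−1)/(N − P_0)`. -/
def RVal (N K M : ℕ) : ℚ := ((N : ℚ) - 1) / ((N : ℚ) - P0Val N K M)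

/-- `R* := (N^g − N^{g−1})/(N^g − 1)`. -/
def RstarVal (N K M : ℕ) : ℚ :=
  ((N : ℚ) ^ gVal K M - (N : ℚ) ^ (gVal K M - 1)) / ((N : ℚ) ^ gVal K M - 1)

/-! Put `x = K/(M+1)` and `n = g - 1`; as `M + 1 ∤ K`, `x` is not an integer, so `n < x < n + 1`.
Then `r_k = ∏_{j ≤ k} (x - j)/j` and `C(n, k) = ∏_{j ≤ k} (n + 1 - j)/j` compare factor by factor:
`0 < r_k < C(n, k)` for `1 ≤ k ≤ n`. Comparing termwise with the binomial expansion
`N^n = (1 + (N - 1))^n = 1 + ∑ C(n, k) (N - 1)^k` gives the inequality, and inverting it the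
bound on `P_0`. -/

theorem one_add_pow_eq_one_add_sum_Icc {R : Type*} [CommSemiring R] (y : R) (n : ℕ) :
    (1 + y) ^ n = 1 + ∑ k ∈ Icc 1 n, (n.choose k : R) * y ^ k := by
  rw [add_comm 1 y, add_pow, sum_range_succ', ← Ico_add_one_right_eq_Icc, sum_Ico_eq_sum_range]
  simp [add_comm, mul_comm]

theorem Nat.cast_ceil_sub_one_lt_and_lt_add_one {α : Type*} [Semiring α] [LinearOrder α]
    [FloorSemiring α] {x : α} (hx : 0 < x) (hxnat : ∀ m : ℕ, x ≠ m) :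
    ((⌈x⌉₊ - 1 : ℕ) : α) < x ∧ x < ((⌈x⌉₊ - 1 : ℕ) : α) + 1 := by
  have hceil : ⌈x⌉₊ ≠ 0 := (Nat.ceil_pos.2 hx).ne'
  refine ⟨((Nat.ceil_eq_iff hceil).1 rfl).1, ?_⟩
  rw [← Nat.cast_add_one, Nat.sub_add_cancel (Nat.one_le_iff_ne_zero.2 hceil)]
  exact (Nat.le_ceil x).lt_of_ne (hxnat _)

section BinomialProducts

variable {α : Type*} [Field α]

theorem Nat.cast_choose_eq_prod_Icc [CharZero α] (n k : ℕ) :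
    (n.choose k : α) = ∏ j ∈ Icc 1 k, ((n + 1 : α) - j) / j := by
  induction k with
  | zero => simp
  | succ k ih =>
    rw [prod_Icc_succ_top (Nat.le_add_left 1 k), ← ih]
    rcases le_or_gt k n with hkn | hnk
    · have h := congrArg (Nat.cast : ℕ → α) (Nat.choose_succ_right_eq n k)
      push_cast [hkn] at h
      rw [mul_div_assoc', eq_div_iff (Nat.cast_ne_zero.2 k.succ_ne_zero)]
      push_cast
      linear_combination h
    · simp [Nat.choose_eq_zero_of_lt hnk, Nat.choose_eq_zero_of_lt (Nat.lt_succ_of_lt hnk)]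

variable [LinearOrder α] [IsStrictOrderedRing α] {x : α} {k n : ℕ}

theorem sub_div_pos_of_mem_Icc {j : ℕ} (hj : j ∈ Icc 1 k) (hkx : (k : α) < x) :
    0 < (x - j) / j := by
  obtain ⟨hj1, hjk⟩ := mem_Icc.1 hj
  have : (j : α) ≤ k := by exact_mod_cast hjk
  exact div_pos (by linarith) (by positivity)

theorem prod_Icc_sub_div_pos (hkx : (k : α) < x) : 0 < ∏ j ∈ Icc 1 k, (x - j) / j :=
  prod_pos fun _ hj => sub_div_pos_of_mem_Icc hj hkx

theorem prod_Icc_sub_div_lt_choose (hk : 1 ≤ k) (hkx : (k : α) < x) (hxn : x < n + 1) :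
    ∏ j ∈ Icc 1 k, (x - j) / j < n.choose k := by
  rw [Nat.cast_choose_eq_prod_Icc]
  refine prod_lt_prod_of_nonempty (fun _ hj => sub_div_pos_of_mem_Icc hj hkx) (fun j hj => ?_)
    (nonempty_Icc.2 hk)
  have : (0 : α) < j := by have := (mem_Icc.1 hj).1; positivity
  gcongr

theorem one_add_sum_prod_Icc_sub_div_pos {y : α} (hnx : (n : α) < x) (hy : 0 ≤ y) :
    0 < 1 + ∑ k ∈ Icc 1 n, (∏ j ∈ Icc 1 k, (x - j) / j) * y ^ k := by
  refine add_pos_of_pos_of_nonneg one_pos (sum_nonneg fun k hk => ?_)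
  have hkn : (k : α) ≤ n := by exact_mod_cast (mem_Icc.1 hk).2
  exact mul_nonneg (prod_Icc_sub_div_pos (hkn.trans_lt hnx)).le (pow_nonneg hy k)

theorem one_add_sum_prod_Icc_sub_div_lt_pow {y : α} (hn : 1 ≤ n) (hnx : (n : α) < x)
    (hxn : x < n + 1) (hy : 0 < y) :
    1 + ∑ k ∈ Icc 1 n, (∏ j ∈ Icc 1 k, (x - j) / j) * y ^ k < (1 + y) ^ n := by
  rw [one_add_pow_eq_one_add_sum_Icc]
  refine (add_lt_add_iff_left 1).2 (sum_lt_sum_of_nonempty (nonempty_Icc.2 hn) fun k hk => ?_)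
  obtain ⟨hk1, hkn⟩ := mem_Icc.1 hk
  have hkx : (k : α) < x := lt_of_le_of_lt (by exact_mod_cast hkn) hnx
  exact mul_lt_mul_of_pos_right (prod_Icc_sub_div_lt_choose hk1 hkx hxn) (pow_pos hy k)

theorem one_add_sum_prod_Icc_sub_div_lt_pow_ceil [FloorSemiring α] {y : α} (hx : 1 < x)
    (hxnat : ∀ m : ℕ, x ≠ m) (hy : 0 < y) :
    1 + ∑ k ∈ Icc 1 (⌈x⌉₊ - 1), (∏ j ∈ Icc 1 k, (x - j) / j) * y ^ k < (1 + y) ^ (⌈x⌉₊ - 1) := by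
  obtain ⟨hlt, hgt⟩ := Nat.cast_ceil_sub_one_lt_and_lt_add_one (zero_lt_one.trans hx) hxnat
  have hn : 1 ≤ ⌈x⌉₊ - 1 := by
    have : 1 < ⌈x⌉₊ := Nat.lt_ceil.2 (by exact_mod_cast hx)
    omega
  exact one_add_sum_prod_Icc_sub_div_lt_pow hn hlt hgt hy

end BinomialProducts

theorem natCast_div_ne_natCast {α : Type*} [DivisionRing α] [CharZero α] {a b : ℕ} (hb : b ≠ 0)
    (h : ¬ b ∣ a) (m : ℕ) : (a : α) / b ≠ m := by
  rw [Ne, div_eq_iff (Nat.cast_ne_zero.2 hb)]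
  refine fun he => h ⟨m, ?_⟩
  rw [mul_comm]
  exact_mod_cast he

theorem sum_lt_pow_and_P0_gt_of_not_dvd_general (N K M : ℕ) (hN : 1 < N) (hM2 : M ≤ K - 1)
    (hndvd : ¬ (M + 1) ∣ K) :
    (1 + ∑ k ∈ Finset.Icc 1 (gVal K M - 1), rVal K M k * ((N : ℚ) - 1) ^ k
        < (N : ℚ) ^ (gVal K M - 1)) ∧
      P0Val N K M > ((N : ℚ) ^ (gVal K M - 1))⁻¹ := by
  have hxnat : ∀ m : ℕ, (K : ℚ) / (M + 1) ≠ m := by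
    simpa using natCast_div_ne_natCast (α := ℚ) M.succ_ne_zero hndvd
  have hMK : M + 1 ≤ K := by
    have : K ≠ 0 := by rintro rfl; exact hndvd (dvd_zero _)
    omega
  have hx1 : 1 < (K : ℚ) / (M + 1) := by
    refine lt_of_le_of_ne ?_ (by simpa using (hxnat 1).symm)
    rw [one_le_div (by positivity)]
    exact_mod_cast hMK
  have hN1 : (0 : ℚ) < N - 1 := sub_pos.2 (by exact_mod_cast hN)
  have hlt := one_add_sum_prod_Icc_sub_div_lt_pow_ceil hx1 hxnat hN1
  rw [add_sub_cancel] at hlt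
  have hpos := one_add_sum_prod_Icc_sub_div_pos
    (Nat.cast_ceil_sub_one_lt_and_lt_add_one (zero_lt_one.trans hx1) hxnat).1 hN1.le
  exact ⟨hlt, inv_strictAnti₀ hpos hlt⟩

/-- if `M+1` does not divide `K`, then
    `1 + ∑_{k=1}^{g−1} r_k (N−1)^k < N^{g−1}` and consequently `P_0 > N^{1−g}`. -/
theorem sum_lt_pow_and_P0_gt_of_not_dvd (N K M : ℕ) (hN : 1 < N) (hK : 1 < K)
    (hM1 : 1 ≤ M) (hM2 : M ≤ K - 1) (hndvd : ¬ (M + 1) ∣ K) :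
    (1 + ∑ k ∈ Finset.Icc 1 (gVal K M - 1), rVal K M k * ((N : ℚ) - 1) ^ k
        < (N : ℚ) ^ (gVal K M - 1)) ∧
      P0Val N K M > ((N : ℚ) ^ (gVal K M - 1))⁻¹ :=
  sum_lt_pow_and_P0_gt_of_not_dvd_general N K M hN hM2 hndvd
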